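/- arXiv:1010.0642 — 2 statements merged into one kernel-verified Lean document; each statement's English description precedes it below -/
import Mathlib

section
/- Gallager-type bound for random access codebooks (Step 1 of the proof of Theorem 1). Let P and Q be probability distributions on 𝒳, let L ≥ 1 be an integer, and let N ≥ 1. Let X, X̃_1,…,X̃_L be mutually independent random vectors in 𝒳^N, where the N components of X are i.i.d. with distribution P and, for each w, the N components of X̃_w are i.i.d. with distribution Q; conditionally on (X, X̃_1,…,X̃_L), let Y ∈ 𝒴^N have distribution W^N(·|X). Then for every ρ ∈ (0,1] and s ∈ (0,1]: Pr{ ∃ w ∈ {1,…,L} : W^N(Y|X) ≤ W^N(Y|X̃_w) } ≤ L^ρ · ( Σ_{Y∈𝒴} (Σ_{X∈𝒳} P(X) W(Y|X)^{1−s}) (Σ_{X∈𝒳} Q(X) W(Y|X)^{s/ρ})^ρ )^N. -/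
open scoped BigOperators Classical

noncomputable section

/-- `W` is a discrete memoryless channel from `𝓧` to `𝓨`. -/
def IsDMC {𝓧 𝓨 : Type*} [Fintype 𝓨] (W : 𝓧 → 𝓨 → ℝ) : Prop :=
  (∀ x y, 0 ≤ W x y) ∧ ∀ x, ∑ y, W x y = 1

/-- `P` is a probability distribution on `𝓧`. -/
def IsDist {𝓧 : Type*} [Fintype 𝓧] (P : 𝓧 → ℝ) : Prop :=
  (∀ x, 0 ≤ P x) ∧ ∑ x, P x = 1

/-- The `N`-fold memoryless extension `W^N(y|x)`. -/
def Wn {𝓧 𝓨 : Type*} (W : 𝓧 → 𝓨 → ℝ) {N : ℕ} (x : Fin N → 𝓧) (y : Fin N → 𝓨) : ℝ :=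
  ∏ j, W (x j) (y j)

/-!
Gallager's argument. Fix the sent word `x` and the output `y`, and put `v = W^N(y|x) > 0`.
The indicator that some competitor `x̃_w` has `v ≤ W^N(y|x̃_w)` is at most
`(∑_w (W^N(y|x̃_w) / v)^(s/ρ))^ρ`. Since `t ↦ t^ρ` is concave, averaging over the independent
competitors can be moved inside the power, which leaves `L^ρ E[W^N(y|X̃)^(s/ρ)]^ρ / v^s`;
the outer factor `v` turns `v^(-s)` into `v^(1-s)`. Averaging over `x` and summing over `y`,
the product form of `P^N`, `Q^N` and `W^N` makes the sum over `𝒴^N` the `N`-th power of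
the single-letter sum.
-/

open Finset

section ProductSums

variable {ι V : Type*} [Fintype ι] [DecidableEq ι] [Fintype V]

lemma sum_pi_prod_mul_apply (q r : V → ℝ) (hq : ∑ v, q v = 1) (w : ι) :
    ∑ g : ι → V, (∏ i, q (g i)) * r (g w) = ∑ v, q v * r v := by
  have hsplit : ∀ g : ι → V,
      (∏ i, q (g i)) * r (g w) = ∏ i, q (g i) * (if i = w then r (g i) else 1) := fun g => by
    rw [prod_mul_distrib, Fintype.prod_ite_eq']
  simp_rw [hsplit]
  rw [← Fintype.prod_sum fun i v => q v * if i = w then r v else 1]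
  simp_rw [mul_ite, mul_one, sum_ite_irrel, hq]
  exact Fintype.prod_ite_eq' w _

lemma sum_pi_prod_mul_sum_apply (q r : V → ℝ) (hq : ∑ v, q v = 1) :
    ∑ g : ι → V, (∏ i, q (g i)) * ∑ w, r (g w) = Fintype.card ι * ∑ v, q v * r v := by
  simp_rw [mul_sum]
  rw [sum_comm]
  simp_rw [sum_pi_prod_mul_apply q r hq]
  rw [sum_const, card_univ, nsmul_eq_mul, mul_sum]

lemma IsDist.pi {P : V → ℝ} (hP : IsDist P) : IsDist fun g : ι → V => ∏ i, P (g i) :=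
  ⟨fun _ => prod_nonneg fun _ _ => hP.1 _,
    (Fintype.prod_sum fun (_ : ι) v => P v).symm.trans (by simp [hP.2])⟩

end ProductSums

lemma IsDist.sum_mul_rpow_le {Ω : Type*} [Fintype Ω] {μ : Ω → ℝ} (hμ : IsDist μ)
    {t : Ω → ℝ} (ht : ∀ ω, 0 ≤ t ω) {ρ : ℝ} (hρ0 : 0 ≤ ρ) (hρ1 : ρ ≤ 1) :
    ∑ ω, μ ω * t ω ^ ρ ≤ (∑ ω, μ ω * t ω) ^ ρ :=
  (Real.concaveOn_rpow hρ0 hρ1).le_map_sum (fun ω _ => hμ.1 ω) hμ.2 fun ω _ => ht ω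

lemma ite_exists_le_le_rpow_sum {ι : Type*} [Fintype ι] {t : ι → ℝ} (ht : ∀ i, 0 ≤ t i)
    {v : ℝ} (hv : 0 < v) {a ρ : ℝ} (ha : 0 ≤ a) (hρ : 0 ≤ ρ) :
    (if ∃ i, v ≤ t i then 1 else 0 : ℝ) ≤ (∑ i, (t i / v) ^ a) ^ ρ := by
  have hterm : ∀ j, 0 ≤ (t j / v) ^ a := fun j => Real.rpow_nonneg (div_nonneg (ht j) hv.le) a
  split_ifs with h
  · obtain ⟨i, hi⟩ := h
    refine Real.one_le_rpow ?_ hρ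
    calc 1 ≤ (t i / v) ^ a := Real.one_le_rpow ((one_le_div hv).2 hi) ha
      _ ≤ ∑ j, (t j / v) ^ a := single_le_sum (fun j _ => hterm j) (mem_univ i)
  · exact Real.rpow_nonneg (sum_nonneg fun j _ => hterm j) ρ

section RandomCoding

variable {α ι : Type*} [Fintype α] [Fintype ι] [DecidableEq ι]
  {q : α → ℝ} {t : α → ℝ} {ρ a : ℝ}

lemma IsDist.sum_pi_prod_mul_ite_exists_le (hq : IsDist q) (ht : ∀ x, 0 ≤ t x) {v : ℝ}
    (hv : 0 < v) (ha : 0 ≤ a) (hρ0 : 0 ≤ ρ) (hρ1 : ρ ≤ 1) :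
    ∑ g : ι → α, (∏ i, q (g i)) * (if ∃ i, v ≤ t (g i) then 1 else 0)
      ≤ (Fintype.card ι * ∑ x, q x * (t x / v) ^ a) ^ ρ :=
  calc ∑ g : ι → α, (∏ i, q (g i)) * (if ∃ i, v ≤ t (g i) then 1 else 0)
      ≤ ∑ g : ι → α, (∏ i, q (g i)) * (∑ i, (t (g i) / v) ^ a) ^ ρ :=
        sum_le_sum fun g _ => mul_le_mul_of_nonneg_left
          (ite_exists_le_le_rpow_sum (fun i => ht (g i)) hv ha hρ0) (hq.pi.1 g)
    _ ≤ (∑ g : ι → α, (∏ i, q (g i)) * ∑ i, (t (g i) / v) ^ a) ^ ρ :=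
        hq.pi.sum_mul_rpow_le
          (fun g => sum_nonneg fun i _ => Real.rpow_nonneg (div_nonneg (ht _) hv.le) a) hρ0 hρ1
    _ = (Fintype.card ι * ∑ x, q x * (t x / v) ^ a) ^ ρ := by
        rw [sum_pi_prod_mul_sum_apply q (fun x => (t x / v) ^ a) hq.2]

lemma IsDist.mul_sum_pi_prod_mul_ite_exists_le (hq : IsDist q) (ht : ∀ x, 0 ≤ t x) {v : ℝ}
    (hv : 0 ≤ v) {s : ℝ} (hs : 0 ≤ s) (hρ0 : 0 < ρ) (hρ1 : ρ ≤ 1) :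
    v * ∑ g : ι → α, (∏ i, q (g i)) * (if ∃ i, v ≤ t (g i) then 1 else 0)
      ≤ Fintype.card ι ^ ρ * (v ^ (1 - s) * (∑ x, q x * t x ^ (s / ρ)) ^ ρ) := by
  set S := ∑ x, q x * t x ^ (s / ρ)
  have hS : 0 ≤ S := sum_nonneg fun x _ => mul_nonneg (hq.1 x) (Real.rpow_nonneg (ht x) _)
  rcases hv.eq_or_lt with rfl | hv
  · rw [zero_mul]
    positivity
  have hvρ : 0 < v ^ (s / ρ) := Real.rpow_pos_of_pos hv _
  have hdiv : ∑ x, q x * (t x / v) ^ (s / ρ) = S / v ^ (s / ρ) := by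
    rw [sum_div]
    exact sum_congr rfl fun x _ => by rw [Real.div_rpow (ht x) hv.le, mul_div_assoc]
  calc v * ∑ g : ι → α, (∏ i, q (g i)) * (if ∃ i, v ≤ t (g i) then 1 else 0)
      ≤ v * (Fintype.card ι * (S / v ^ (s / ρ))) ^ ρ := by
        rw [← hdiv]
        exact mul_le_mul_of_nonneg_left
          (hq.sum_pi_prod_mul_ite_exists_le ht hv (div_nonneg hs hρ0.le) hρ0.le hρ1) hv.le
    _ = Fintype.card ι ^ ρ * (v ^ (1 - s) * S ^ ρ) := by
        rw [Real.mul_rpow (Nat.cast_nonneg _) (div_nonneg hS hvρ.le), Real.div_rpow hS hvρ.le,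
          ← Real.rpow_mul hv.le, div_mul_cancel₀ s hρ0.ne', Real.rpow_sub hv, Real.rpow_one]
        field_simp

theorem IsDist.random_coding_bound {β : Type*} [Fintype β] {V : α → β → ℝ}
    (hV : ∀ x y, 0 ≤ V x y) {p : α → ℝ} (hp : ∀ x, 0 ≤ p x) (hq : IsDist q) {s : ℝ}
    (hs : 0 ≤ s) (hρ0 : 0 < ρ) (hρ1 : ρ ≤ 1) :
    ∑ x, ∑ g : ι → α, ∑ y, p x * (∏ i, q (g i)) * V x y *
        (if ∃ i, V x y ≤ V (g i) y then 1 else 0)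
      ≤ Fintype.card ι ^ ρ *
        ∑ y, (∑ x, p x * V x y ^ (1 - s)) * (∑ x, q x * V x y ^ (s / ρ)) ^ ρ := by
  have hregroup : ∀ x, ∑ g : ι → α, ∑ y, p x * (∏ i, q (g i)) * V x y *
        (if ∃ i, V x y ≤ V (g i) y then 1 else 0)
      = ∑ y, p x * (V x y * ∑ g : ι → α, (∏ i, q (g i)) *
        (if ∃ i, V x y ≤ V (g i) y then 1 else 0)) := fun x => by
    rw [sum_comm]
    refine sum_congr rfl fun y _ => ?_
    rw [mul_sum, mul_sum]
    exact sum_congr rfl fun g _ => by ring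
  calc _ = ∑ x, ∑ y, p x * (V x y * ∑ g : ι → α, (∏ i, q (g i)) *
          (if ∃ i, V x y ≤ V (g i) y then 1 else 0)) := sum_congr rfl fun x _ => hregroup x
    _ ≤ ∑ x, ∑ y, p x * (Fintype.card ι ^ ρ *
          (V x y ^ (1 - s) * (∑ x', q x' * V x' y ^ (s / ρ)) ^ ρ)) :=
        sum_le_sum fun x _ => sum_le_sum fun y _ => mul_le_mul_of_nonneg_left
          (hq.mul_sum_pi_prod_mul_ite_exists_le (fun x' => hV x' y) (hV x y) hs hρ0 hρ1) (hp x)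
    _ = _ := by
        rw [sum_comm]
        simp only [mul_sum, sum_mul]
        exact sum_congr rfl fun y _ => sum_congr rfl fun x _ => by ring

end RandomCoding

section Memoryless

variable {𝓧 𝓨 : Type*} {W : 𝓧 → 𝓨 → ℝ} {N : ℕ}

lemma Wn_nonneg (hW : ∀ x y, 0 ≤ W x y) (x : Fin N → 𝓧) (y : Fin N → 𝓨) : 0 ≤ Wn W x y :=
  prod_nonneg fun _ _ => hW _ _

lemma sum_prod_mul_Wn_rpow [Fintype 𝓧] (hW : ∀ x y, 0 ≤ W x y) (P : 𝓧 → ℝ) (y : Fin N → 𝓨)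
    (r : ℝ) :
    ∑ x : Fin N → 𝓧, (∏ j, P (x j)) * Wn W x y ^ r = ∏ j, ∑ a, P a * W a (y j) ^ r := by
  rw [Fintype.prod_sum]
  refine sum_congr rfl fun x _ => ?_
  rw [Wn, ← Real.finsetProd_rpow _ _ fun j _ => hW _ _, ← prod_mul_distrib]

end Memoryless

theorem stmt4_general {𝓧 𝓨 : Type*} [Fintype 𝓧] [Fintype 𝓨]
    (W : 𝓧 → 𝓨 → ℝ) (hW : IsDMC W)
    (P Q : 𝓧 → ℝ) (hP : IsDist P) (hQ : IsDist Q)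
    (L N : ℕ)
    (ρ s : ℝ) (hρ : ρ ∈ Set.Ioc (0:ℝ) 1) (hs : s ∈ Set.Ioc (0:ℝ) 1) :
    (∑ x : Fin N → 𝓧, ∑ xt : Fin L → Fin N → 𝓧, ∑ y : Fin N → 𝓨,
        (∏ j, P (x j)) * (∏ w, ∏ j, Q (xt w j)) * Wn W x y *
          (if ∃ w, Wn W x y ≤ Wn W (xt w) y then (1:ℝ) else 0))
      ≤ (L : ℝ) ^ ρ *
        (∑ y : 𝓨, (∑ x : 𝓧, P x * W x y ^ (1 - s)) *
            (∑ x : 𝓧, Q x * W x y ^ (s / ρ)) ^ ρ) ^ N := by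
  have hletter : ∀ y : Fin N → 𝓨,
      (∏ j, ∑ a, P a * W a (y j) ^ (1 - s)) * (∏ j, ∑ a, Q a * W a (y j) ^ (s / ρ)) ^ ρ
        = ∏ j, (∑ a, P a * W a (y j) ^ (1 - s)) * (∑ a, Q a * W a (y j) ^ (s / ρ)) ^ ρ :=
    fun y => by
      rw [← Real.finsetProd_rpow _ _ fun j _ => sum_nonneg fun a _ =>
        mul_nonneg (hQ.1 a) (Real.rpow_nonneg (hW.1 a (y j)) _), prod_mul_distrib]
  calc _ ≤ (Fintype.card (Fin L) : ℝ) ^ ρ * ∑ y : Fin N → 𝓨,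
          (∑ x : Fin N → 𝓧, (∏ j, P (x j)) * Wn W x y ^ (1 - s)) *
            (∑ x : Fin N → 𝓧, (∏ j, Q (x j)) * Wn W x y ^ (s / ρ)) ^ ρ := by
        -- `convert` only reconciles the `Decidable` instances of the two `if`s
        convert hQ.pi.random_coding_bound (ι := Fin L) (Wn_nonneg hW.1) hP.pi.1 hs.1.le hρ.1 hρ.2
    _ = _ := by
        simp_rw [sum_prod_mul_Wn_rpow hW.1, hletter, Fintype.card_fin, Fintype.sum_pow]

/-- Gallager-type bound for random access codebooks
(Step 1 of the proof of Theorem 1). -/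
theorem stmt4 {𝓧 𝓨 : Type*} [Fintype 𝓧] [Fintype 𝓨] [Nonempty 𝓧] [Nonempty 𝓨]
    (W : 𝓧 → 𝓨 → ℝ) (hW : IsDMC W)
    (P Q : 𝓧 → ℝ) (hP : IsDist P) (hQ : IsDist Q)
    (L N : ℕ) (hL : 1 ≤ L) (hN : 1 ≤ N)
    (ρ s : ℝ) (hρ : ρ ∈ Set.Ioc (0:ℝ) 1) (hs : s ∈ Set.Ioc (0:ℝ) 1) :
    (∑ x : Fin N → 𝓧, ∑ xt : Fin L → Fin N → 𝓧, ∑ y : Fin N → 𝓨,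
        (∏ j, P (x j)) * (∏ w, ∏ j, Q (xt w j)) * Wn W x y *
          (if ∃ w, Wn W x y ≤ Wn W (xt w) y then (1:ℝ) else 0))
      ≤ (L : ℝ) ^ ρ *
        (∑ y : 𝓨, (∑ x : 𝓧, P x * W x y ^ (1 - s)) *
            (∑ x : 𝓧, Q x * W x y ^ (s / ρ)) ^ ρ) ^ N :=
  stmt4_general W hW P Q hP hQ L N ρ s hρ hs
end
end

section
/- Gallager-type bound for generalized random coding with per-codeword input distributions (from the proof of Lemma 1, single-transmitter form). Let P be a probability distribution on 𝒳, let F be a nonempty finite index set and for each w ∈ F let Q_w be a probability distribution on 𝒳, and let N ≥ 1. Let X and (X̃_w)_{w∈F} be mutually independent random vectors in 𝒳^N with i.i.d. components: the components of X distributed as P and, for each w, the components of X̃_w distributed as Q_w. Conditionally on them, let Y ∈ 𝒴^N have distribution W^N(·|X). Then for every ρ ∈ (0,1] and s ∈ (0,1]: Pr{ ∃ w ∈ F : W^N(Y|X) ≤ W^N(Y|X̃_w) } ≤ |F|^ρ · Σ_{y∈𝒴^N} ( ∏_{j=1}^N Σ_{x∈𝒳} P(x) W(y_j|x)^{1−s}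 ) · ( max_{w∈F} ∏_{j=1}^N Σ_{x∈𝒳} Q_w(x) W(y_j|x)^{s/ρ} )^ρ. -/
open scoped BigOperators Classical

noncomputable section

set_option maxHeartbeats 1000000

lemma sum_pi_prod' {ι α : Type*} [Fintype ι] [DecidableEq ι] [Fintype α] (f : ι → α → ℝ) :
    ∑ v : ι → α, ∏ i, f i (v i) = ∏ i, ∑ a, f i a := by
  rw [Finset.prod_univ_sum, Fintype.piFinset_univ]

lemma pointwise' {F : Type*} [Fintype F] (a : ℝ) (b : F → ℝ) (ha : 0 ≤ a)
    (hb : ∀ w, 0 ≤ b w) {ρ s : ℝ} (hρ0 : 0 < ρ) (hs0 : 0 < s) :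
    a * (if ∃ w, a ≤ b w then (1:ℝ) else 0) ≤ a ^ (1 - s) * (∑ w, b w ^ (s / ρ)) ^ ρ := by
  have hsum0 : 0 ≤ ∑ w, b w ^ (s / ρ) :=
    Finset.sum_nonneg fun w _ => Real.rpow_nonneg (hb w) _
  have hrhs : 0 ≤ a ^ (1 - s) * (∑ w, b w ^ (s / ρ)) ^ ρ :=
    mul_nonneg (Real.rpow_nonneg ha _) (Real.rpow_nonneg hsum0 _)
  split_ifs with h
  · obtain ⟨w, hw⟩ := h
    rcases eq_or_lt_of_le ha with h0 | h0
    · simpa [← h0] using hrhs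
    · have h1 : a ^ (s / ρ) ≤ ∑ w', b w' ^ (s / ρ) := by
        calc a ^ (s / ρ) ≤ b w ^ (s / ρ) := Real.rpow_le_rpow ha hw (by positivity)
          _ ≤ _ := Finset.single_le_sum (fun w' _ => Real.rpow_nonneg (hb w') _)
              (Finset.mem_univ w)
      have h2 : a ^ s ≤ (∑ w', b w' ^ (s / ρ)) ^ ρ := by
        have h3 := Real.rpow_le_rpow (Real.rpow_nonneg ha _) h1 hρ0.le
        rwa [← Real.rpow_mul ha, div_mul_cancel₀ s hρ0.ne'] at h3
      calc a * 1 = a ^ (1 - s) * a ^ s := by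
            rw [mul_one, ← Real.rpow_add h0, sub_add_cancel, Real.rpow_one]
        _ ≤ _ := mul_le_mul_of_nonneg_left h2 (Real.rpow_nonneg ha _)
  · simpa using hrhs

/-- Gallager-type bound for generalized random coding with
per-codeword input distributions (from the proof of Lemma 1, single-transmitter form). -/
theorem stmt10 {𝓧 𝓨 : Type*} [Fintype 𝓧] [Fintype 𝓨] [Nonempty 𝓧] [Nonempty 𝓨]
    {F : Type*} [Fintype F] [Nonempty F]
    (W : 𝓧 → 𝓨 → ℝ) (hW : IsDMC W)
    (P : 𝓧 → ℝ) (hP : IsDist P) (Q : F → 𝓧 → ℝ) (hQ : ∀ w, IsDist (Q w))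
    (N : ℕ) (hN : 1 ≤ N)
    (ρ s : ℝ) (hρ : ρ ∈ Set.Ioc (0:ℝ) 1) (hs : s ∈ Set.Ioc (0:ℝ) 1) :
    (∑ x : Fin N → 𝓧, ∑ xt : F → Fin N → 𝓧, ∑ y : Fin N → 𝓨,
        (∏ j, P (x j)) * (∏ w, ∏ j, Q w (xt w j)) * Wn W x y *
          (if ∃ w, Wn W x y ≤ Wn W (xt w) y then (1:ℝ) else 0))
      ≤ (Fintype.card F : ℝ) ^ ρ *
          ∑ y : Fin N → 𝓨,
            (∏ j, ∑ x : 𝓧, P x * W x (y j) ^ (1 - s)) *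
              (⨆ w : F, ∏ j, ∑ x : 𝓧, Q w x * W x (y j) ^ (s / ρ)) ^ ρ := by
  obtain ⟨hρ0, hρ1⟩ := hρ
  obtain ⟨hs0, hs1⟩ := hs
  obtain ⟨hW0, hW1⟩ := hW
  obtain ⟨hP0, hP1⟩ := hP
  have hQ0 : ∀ w x, 0 ≤ Q w x := fun w => (hQ w).1
  have hQ1 : ∀ w, ∑ x, Q w x = 1 := fun w => (hQ w).2
  have hWn0 : ∀ (x : Fin N → 𝓧) (y : Fin N → 𝓨), 0 ≤ Wn W x y := fun x y =>
    Finset.prod_nonneg fun j _ => hW0 _ _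
  have hPx0 : ∀ x : Fin N → 𝓧, 0 ≤ ∏ j, P (x j) :=
    fun x => Finset.prod_nonneg fun j _ => hP0 _
  have hQxt0 : ∀ xt : F → Fin N → 𝓧, 0 ≤ ∏ w, ∏ j, Q w (xt w j) :=
    fun xt => Finset.prod_nonneg fun w _ => Finset.prod_nonneg fun j _ => hQ0 _ _
  have hS0 : ∀ (xt : F → Fin N → 𝓧) (y : Fin N → 𝓨),
      0 ≤ ∑ w, Wn W (xt w) y ^ (s / ρ) :=
    fun xt y => Finset.sum_nonneg fun w _ => Real.rpow_nonneg (hWn0 _ _) _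
  have hT0 : ∀ (w : F) (y : Fin N → 𝓨),
      0 ≤ ∏ j, ∑ x : 𝓧, Q w x * W x (y j) ^ (s / ρ) := fun w y =>
    Finset.prod_nonneg fun j _ => Finset.sum_nonneg fun x _ =>
      mul_nonneg (hQ0 w x) (Real.rpow_nonneg (hW0 _ _) _)
  have hG0 : ∀ y : Fin N → 𝓨, 0 ≤ ∏ j, ∑ x : 𝓧, P x * W x (y j) ^ (1 - s) := fun y =>
    Finset.prod_nonneg fun j _ => Finset.sum_nonneg fun x _ =>
      mul_nonneg (hP0 x) (Real.rpow_nonneg (hW0 _ _) _)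
  have hTle : ∀ (y : Fin N → 𝓨) (w : F),
      (∏ j, ∑ x : 𝓧, Q w x * W x (y j) ^ (s / ρ)) ≤
        ⨆ w' : F, ∏ j, ∑ x : 𝓧, Q w' x * W x (y j) ^ (s / ρ) := fun y w =>
    le_ciSup (f := fun w' : F => ∏ j, ∑ x : 𝓧, Q w' x * W x (y j) ^ (s / ρ))
      (Set.Finite.bddAbove (Set.finite_range _)) w
  have hM0 : ∀ y : Fin N → 𝓨,
      0 ≤ ⨆ w : F, ∏ j, ∑ x : 𝓧, Q w x * W x (y j) ^ (s / ρ) := fun y =>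
    le_trans (hT0 (Classical.arbitrary F) y) (hTle y _)
  -- total mass of the xt-distribution
  have hQxt1 : ∑ xt : F → Fin N → 𝓧, ∏ w, ∏ j, Q w (xt w j) = 1 := by
    have h1' := sum_pi_prod' (fun (w : F) (v : Fin N → 𝓧) => ∏ j, Q w (v j))
    have h1 : (∑ xt : F → Fin N → 𝓧, ∏ w, ∏ j, Q w (xt w j))
        = ∏ w : F, ∑ v : Fin N → 𝓧, ∏ j, Q w (v j) := h1'
    rw [h1]
    refine Finset.prod_eq_one fun w _ => ?_
    have h2' := sum_pi_prod' (fun (_ : Fin N) (a : 𝓧) => Q w a)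
    have h2 : (∑ v : Fin N → 𝓧, ∏ j, Q w (v j)) = ∏ j : Fin N, ∑ a : 𝓧, Q w a := h2'
    rw [h2]
    exact Finset.prod_eq_one fun j _ => hQ1 w
  calc
    (∑ x : Fin N → 𝓧, ∑ xt : F → Fin N → 𝓧, ∑ y : Fin N → 𝓨,
        (∏ j, P (x j)) * (∏ w, ∏ j, Q w (xt w j)) * Wn W x y *
          (if ∃ w, Wn W x y ≤ Wn W (xt w) y then (1:ℝ) else 0))
      ≤ ∑ x : Fin N → 𝓧, ∑ xt : F → Fin N → 𝓧, ∑ y : Fin N → 𝓨,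
          ((∏ j, P (x j)) * Wn W x y ^ (1 - s)) *
            ((∏ w, ∏ j, Q w (xt w j)) * (∑ w, Wn W (xt w) y ^ (s / ρ)) ^ ρ) := by
        refine Finset.sum_le_sum fun x _ => Finset.sum_le_sum fun xt _ =>
          Finset.sum_le_sum fun y _ => ?_
        have hpt := pointwise' (Wn W x y) (fun w => Wn W (xt w) y) (hWn0 x y)
          (fun w => hWn0 _ _) hρ0 hs0
        calc (∏ j, P (x j)) * (∏ w, ∏ j, Q w (xt w j)) * Wn W x y *
              (if ∃ w, Wn W x y ≤ Wn W (xt w) y then (1:ℝ) else 0)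
            = ((∏ j, P (x j)) * (∏ w, ∏ j, Q w (xt w j))) *
              (Wn W x y * (if ∃ w, Wn W x y ≤ Wn W (xt w) y then (1:ℝ) else 0)) := by
              ring
          _ ≤ ((∏ j, P (x j)) * (∏ w, ∏ j, Q w (xt w j))) *
              (Wn W x y ^ (1 - s) * (∑ w, Wn W (xt w) y ^ (s / ρ)) ^ ρ) :=
              mul_le_mul_of_nonneg_left hpt (mul_nonneg (hPx0 x) (hQxt0 xt))
          _ = _ := by ring
    _ = ∑ y : Fin N → 𝓨,
          (∑ x : Fin N → 𝓧, (∏ j, P (x j)) * Wn W x y ^ (1 - s)) *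
          (∑ xt : F → Fin N → 𝓧,
            (∏ w, ∏ j, Q w (xt w j)) * (∑ w, Wn W (xt w) y ^ (s / ρ)) ^ ρ) := by
        have e1 : (∑ x : Fin N → 𝓧, ∑ xt : F → Fin N → 𝓧, ∑ y : Fin N → 𝓨,
              ((∏ j, P (x j)) * Wn W x y ^ (1 - s)) *
                ((∏ w, ∏ j, Q w (xt w j)) * (∑ w, Wn W (xt w) y ^ (s / ρ)) ^ ρ))
            = ∑ x : Fin N → 𝓧, ∑ y : Fin N → 𝓨, ∑ xt : F → Fin N → 𝓧,
              ((∏ j, P (x j)) * Wn W x y ^ (1 - s)) *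
                ((∏ w, ∏ j, Q w (xt w j)) * (∑ w, Wn W (xt w) y ^ (s / ρ)) ^ ρ) :=
          Finset.sum_congr rfl fun x _ => Finset.sum_comm
        rw [e1, Finset.sum_comm]
        refine Finset.sum_congr rfl fun y _ => ?_
        exact (Finset.sum_mul_sum Finset.univ Finset.univ
          (fun x : Fin N → 𝓧 => (∏ j, P (x j)) * Wn W x y ^ (1 - s))
          (fun xt : F → Fin N → 𝓧 =>
            (∏ w, ∏ j, Q w (xt w j)) * (∑ w, Wn W (xt w) y ^ (s / ρ)) ^ ρ)).symm
    _ ≤ ∑ y : Fin N → 𝓨,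
          (∏ j, ∑ x : 𝓧, P x * W x (y j) ^ (1 - s)) *
            ((Fintype.card F : ℝ) ^ ρ *
              (⨆ w : F, ∏ j, ∑ x : 𝓧, Q w x * W x (y j) ^ (s / ρ)) ^ ρ) := by
        refine Finset.sum_le_sum fun y _ => ?_
        have hC : (∑ x : Fin N → 𝓧, (∏ j, P (x j)) * Wn W x y ^ (1 - s))
            = ∏ j, ∑ x : 𝓧, P x * W x (y j) ^ (1 - s) := by
          have e2' := sum_pi_prod' (fun (j : Fin N) (a : 𝓧) => P a * W a (y j) ^ (1 - s))
          have e2 : (∑ x : Fin N → 𝓧, ∏ j, (P (x j) * W (x j) (y j) ^ (1 - s)))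
              = ∏ j : Fin N, ∑ a : 𝓧, P a * W a (y j) ^ (1 - s) := e2'
          rw [← e2]
          refine Finset.sum_congr rfl fun x _ => ?_
          rw [Wn, ← Real.finset_prod_rpow _ _ (fun j _ => hW0 _ _) _,
            ← Finset.prod_mul_distrib]
        rw [hC]
        refine mul_le_mul_of_nonneg_left ?_ (hG0 y)
        -- Jensen step
        have hJ : (∑ xt : F → Fin N → 𝓧,
              (∏ w, ∏ j, Q w (xt w j)) * (∑ w, Wn W (xt w) y ^ (s / ρ)) ^ ρ)
            ≤ (∑ xt : F → Fin N → 𝓧,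
              (∏ w, ∏ j, Q w (xt w j)) * (∑ w, Wn W (xt w) y ^ (s / ρ))) ^ ρ := by
          have hjen := Real.arith_mean_le_rpow_mean Finset.univ
            (fun xt : F → Fin N → 𝓧 => ∏ w, ∏ j, Q w (xt w j))
            (fun xt => (∑ w, Wn W (xt w) y ^ (s / ρ)) ^ ρ)
            (fun xt _ => hQxt0 xt) hQxt1
            (fun xt _ => Real.rpow_nonneg (hS0 xt y) _)
            (p := 1 / ρ) (by rw [le_div_iff₀ hρ0]; simpa using hρ1)
          rw [one_div_one_div] at hjen
          refine hjen.trans_eq ?_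
          congr 1
          refine Finset.sum_congr rfl fun xt _ => ?_
          rw [one_div, Real.rpow_rpow_inv (hS0 xt y) hρ0.ne']
        -- identify the mean with the sum of the T's
        have hD2 : (∑ xt : F → Fin N → 𝓧,
              (∏ w, ∏ j, Q w (xt w j)) * (∑ w, Wn W (xt w) y ^ (s / ρ)))
            = ∑ w : F, ∏ j, ∑ x : 𝓧, Q w x * W x (y j) ^ (s / ρ) := by
          simp_rw [Finset.mul_sum]
          rw [Finset.sum_comm]
          refine Finset.sum_congr rfl fun w _ => ?_
          have key : ∀ xt : F → Fin N → 𝓧,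
              (∏ w', ∏ j, Q w' (xt w' j)) * Wn W (xt w) y ^ (s / ρ)
              = ∏ w', ((∏ j, Q w' (xt w' j)) *
                  (if w' = w then ∏ j, W (xt w' j) (y j) ^ (s / ρ) else 1)) := by
            intro xt
            rw [Finset.prod_mul_distrib, Finset.prod_ite_eq' Finset.univ w
              (fun w' => ∏ j, W (xt w' j) (y j) ^ (s / ρ)), if_pos (Finset.mem_univ w),
              Wn, ← Real.finset_prod_rpow _ _ (fun j _ => hW0 _ _) _]
          simp_rw [key]
          have e3 : (∑ xt : F → Fin N → 𝓧,
                ∏ w', ((∏ j, Q w' (xt w' j)) *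
                  (if w' = w then ∏ j, W (xt w' j) (y j) ^ (s / ρ) else 1)))
              = ∏ w' : F, ∑ v : Fin N → 𝓧, ((∏ j, Q w' (v j)) *
                  (if w' = w then ∏ j, W (v j) (y j) ^ (s / ρ) else 1)) := by
            have e3' := sum_pi_prod' (fun (w' : F) (v : Fin N → 𝓧) => (∏ j, Q w' (v j)) *
              (if w' = w then ∏ j, W (v j) (y j) ^ (s / ρ) else 1))
            exact e3'
          rw [e3]
          rw [Finset.prod_eq_single w ?_ (fun h => absurd (Finset.mem_univ w) h)]
          · simp only [eq_self_iff_true, if_true]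
            have e4 : ∀ v : Fin N → 𝓧, (∏ j, Q w (v j)) * (∏ j, W (v j) (y j) ^ (s / ρ))
                = ∏ j, (Q w (v j) * W (v j) (y j) ^ (s / ρ)) := fun v =>
              (Finset.prod_mul_distrib).symm
            simp_rw [e4]
            have e4' := sum_pi_prod' (fun (j : Fin N) (a : 𝓧) => Q w a * W a (y j) ^ (s / ρ))
            exact e4'
          · intro w' _ hw'
            simp_rw [if_neg hw', mul_one]
            have e5' := sum_pi_prod' (fun (_ : Fin N) (a : 𝓧) => Q w' a)
            have e5 : (∑ v : Fin N → 𝓧, ∏ j, Q w' (v j)) = ∏ j : Fin N, ∑ a : 𝓧, Q w' a := e5'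
            rw [e5]
            exact Finset.prod_eq_one fun j _ => hQ1 w'
        rw [hD2] at hJ
        refine hJ.trans ?_
        have hsumT : (∑ w : F, ∏ j, ∑ x : 𝓧, Q w x * W x (y j) ^ (s / ρ))
            ≤ (Fintype.card F : ℝ) *
              ⨆ w : F, ∏ j, ∑ x : 𝓧, Q w x * W x (y j) ^ (s / ρ) := by
          calc _ ≤ ∑ _w : F, ⨆ w : F, ∏ j, ∑ x : 𝓧, Q w x * W x (y j) ^ (s / ρ) :=
                Finset.sum_le_sum fun w _ => hTle y w
            _ = _ := by rw [Finset.sum_const, Finset.card_univ, nsmul_eq_mul]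
        calc (∑ w : F, ∏ j, ∑ x : 𝓧, Q w x * W x (y j) ^ (s / ρ)) ^ ρ
            ≤ ((Fintype.card F : ℝ) *
                ⨆ w : F, ∏ j, ∑ x : 𝓧, Q w x * W x (y j) ^ (s / ρ)) ^ ρ :=
              Real.rpow_le_rpow (Finset.sum_nonneg fun w _ => hT0 w y) hsumT hρ0.le
          _ = _ := Real.mul_rpow (Nat.cast_nonneg _) (hM0 y)
    _ = (Fintype.card F : ℝ) ^ ρ *
          ∑ y : Fin N → 𝓨,
            (∏ j, ∑ x : 𝓧, P x * W x (y j) ^ (1 - s)) *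
              (⨆ w : F, ∏ j, ∑ x : 𝓧, Q w x * W x (y j) ^ (s / ρ)) ^ ρ := by
        rw [Finset.mul_sum]
        exact Finset.sum_congr rfl fun y _ => by ring
end
end
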